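/- In the 6-dimensional case, the algebras L(0,1,1,0) and L(0,1,0,0) are non-isomorphic, where L(0,1,1,0) has nonzero products [e₀,e₀]=e₂, [eᵢ,e₀]=e_{i+1} for 2≤i≤4, [e₀,e₁]=e₄+e₅, [e₂,e₁]=e₅, and L(0,1,0,0) has [e₀,e₀]=e₂, [eᵢ,e₀]=e_{i+1} for 2≤i≤4, [e₀,e₁]=e₄, [e₂,e₁]=e₅. -/

import Mathlib

/-- The bracket of the algebra `L(0,1,1,0)` in `SLeib₆`. -/
def brL0110 (x y : Fin 6 → ℂ) : Fin 6 → ℂ :=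
  ![0, 0,
    x 0 * y 0,
    x 2 * y 0,
    x 3 * y 0 + x 0 * y 1,
    x 4 * y 0 + x 0 * y 1 + x 2 * y 1]

/-- The bracket of the algebra `L(0,1,0,0)` in `SLeib₆`. -/
def brL0100 (x y : Fin 6 → ℂ) : Fin 6 → ℂ :=
  ![0, 0,
    x 0 * y 0,
    x 2 * y 0,
    x 3 * y 0 + x 0 * y 1,
    x 4 * y 0 + x 2 * y 1]

/-!
In both algebras the right-normed power `[[[[x, x], x], x], x]` equals `x₀⁵ e₅`, so an
isomorphism sends `e₀` to an element `x` with `x₀ ≠ 0`. In `L(0,1,1,0)` the product `[e₀, e₁]`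
is the sum `e₄ + e₅` of the fourth and fifth right-normed powers of `e₀`. In `L(0,1,0,0)`,
`[x, y] = [[[x, x], x], x] + [[[[x, x], x], x], x]` forces `y₀ = 0`, then `y₁ = x₀³`, and then
`x₀⁵ = 0`.
-/

section SplitPair

variable {V W : Type*}

/-- `(br · x)^[n] x` is the right-normed power of `x` with `n + 1` factors. -/
def IsSplitPair [Zero V] [Add V] (br : V → V → V) (x y : V) : Prop :=
  (br · x)^[4] x ≠ 0 ∧ br x y = (br · x)^[3] x + (br · x)^[4] x

theorem IsSplitPair.map [AddZeroClass V] [AddZeroClass W] {br₁ : V → V → V} {br₂ : W → W → W}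
    (f : V →+ W) (hf : Function.Injective f) (hbr : ∀ x y, f (br₁ x y) = br₂ (f x) (f y))
    {x y : V} (h : IsSplitPair br₁ x y) : IsSplitPair br₂ (f x) (f y) := by
  have hpow (n : ℕ) : f ((br₁ · x)^[n] x) = (br₂ · (f x))^[n] (f x) :=
    Function.Semiconj.iterate_right (fun z => hbr z x) n x
  refine ⟨?_, ?_⟩
  · rw [← hpow]
    exact (map_ne_zero_iff f hf).mpr h.1
  · rw [← hbr, h.2, map_add, hpow, hpow]

end SplitPair

theorem brL0110_isSplitPair : IsSplitPair brL0110 (Pi.single 0 1) (Pi.single 1 1) := by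
  refine ⟨fun h => by simpa [brL0110] using congrFun h 5, ?_⟩
  funext i
  fin_cases i <;> simp [brL0110]

theorem brL0100_iterate_three (x : Fin 6 → ℂ) :
    (brL0100 · x)^[3] x = ![0, 0, 0, 0, x 0 ^ 4, x 2 * x 0 ^ 3] := by
  funext i
  fin_cases i <;> simp [brL0100] <;> ring

theorem brL0100_iterate_four (x : Fin 6 → ℂ) :
    (brL0100 · x)^[4] x = Pi.single 5 (x 0 ^ 5) := by
  rw [Function.iterate_succ_apply', brL0100_iterate_three]
  funext i
  fin_cases i <;> simp [brL0100, pow_succ]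

theorem brL0100_not_isSplitPair (x y : Fin 6 → ℂ) : ¬ IsSplitPair brL0100 x y := by
  rintro ⟨hx, hxy⟩
  have hx0 : x 0 ≠ 0 := fun h0 => hx (by rw [brL0100_iterate_four, h0]; simp)
  rw [brL0100_iterate_four, brL0100_iterate_three] at hxy
  have h2 : x 0 * y 0 = 0 := by simpa [brL0100] using congrFun hxy 2
  have h4 : x 3 * y 0 + x 0 * y 1 = x 0 ^ 4 := by simpa [brL0100] using congrFun hxy 4
  have h5 : x 4 * y 0 + x 2 * y 1 = x 2 * x 0 ^ 3 + x 0 ^ 5 := by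
    simpa [brL0100] using congrFun hxy 5
  have hy0 : y 0 = 0 := (mul_eq_zero.mp h2).resolve_left hx0
  have hy1 : y 1 = x 0 ^ 3 := mul_left_cancel₀ hx0 (by linear_combination h4 - x 3 * hy0)
  rw [hy0, hy1] at h5
  exact pow_ne_zero 5 hx0 (by linear_combination -h5)

/-- The algebras `L(0,1,1,0)` and `L(0,1,0,0)` are not isomorphic. -/
theorem L0110_not_isomorphic_L0100 :
    ¬ ∃ f : (Fin 6 → ℂ) ≃ₗ[ℂ] (Fin 6 → ℂ),
        ∀ x y : Fin 6 → ℂ, f (brL0110 x y) = brL0100 (f x) (f y) := by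
  rintro ⟨f, hf⟩
  exact brL0100_not_isSplitPair _ _
    (brL0110_isSplitPair.map f.toLinearMap.toAddMonoidHom f.injective hf)
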